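/- For every n ≥ 1, the 3×3 matrix whose entries are the n-th base-10 lunar powers of [[44, 38, 45], [46, 0, 28], [18, 47, 8]] is a base-10 lunar magic square with pairwise distinct entries whose total is the n-th lunar power of 48; in particular, for every n there exist 3×3 lunar magic squares of n-th lunar powers. -/

import Mathlib

/-- The `d`-th base-`B` digit of `n` (position 0 is the least significant digit). -/
def lunarDigit (B n d : ℕ) : ℕ := n / B ^ d % B

/-- Base-`B` lunar addition: the `d`-th digit of `x ⊕ y` is the maximum of the
`d`-th digits of `x` and `y` (no carries). -/
def lunarAdd (B x y : ℕ) : ℕ :=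
  ∑ d ∈ Finset.range (x + y + 1), max (lunarDigit B x d) (lunarDigit B y d) * B ^ d

/-- Base-`B` lunar multiplication: the `d`-th digit of `x ⊗ y` is the maximum over
`j + k = d` of the minimum of the `j`-th digit of `x` and the `k`-th digit of `y`. -/
def lunarMul (B x y : ℕ) : ℕ :=
  ∑ d ∈ Finset.range (x + y + 1),
    ((Finset.range (d + 1)).sup fun j => min (lunarDigit B x j) (lunarDigit B y (d - j))) * B ^ d

/-- `M` is a 3×3 base-`B` lunar magic square with total `T`: the lunar sums of the
three rows, the three columns, and the two diagonals all equal `T`. -/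
def IsLunarMagic (B : ℕ) (M : Fin 3 → Fin 3 → ℕ) (T : ℕ) : Prop :=
  (∀ i, lunarAdd B (lunarAdd B (M i 0) (M i 1)) (M i 2) = T) ∧
  (∀ j, lunarAdd B (lunarAdd B (M 0 j) (M 1 j)) (M 2 j) = T) ∧
  lunarAdd B (lunarAdd B (M 0 0) (M 1 1)) (M 2 2) = T ∧
  lunarAdd B (lunarAdd B (M 0 2) (M 1 1)) (M 2 0) = T

/-- The nine entries of `M` are pairwise distinct. -/
def DistinctEntries (M : Fin 3 → Fin 3 → ℕ) : Prop :=
  ∀ i j i' j', M i j = M i' j' → i = i' ∧ j = j'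

/-- The `n`-th base-`B` lunar power of `a` (so `lunarPow B a 1 = a`, and
`lunarPow B a 0` is the lunar multiplicative identity `B - 1`). -/
def lunarPow (B a : ℕ) : ℕ → ℕ
  | 0 => B - 1
  | 1 => a
  | n + 2 => lunarMul B a (lunarPow B a (n + 1))

/-! For `a = B t + u < B²` and `n ≥ 1`, lunar multiplication by `a` only mixes neighbouring digits,
so the `n`-th lunar power of `a` has digits `u, min t u, …, min t u, t` (from the units up to
position `n`). Lunar addition being the digitwise maximum, a line of the square sums to the `n`-th
power of `48` as soon as its units digits have maximum `8`, its tens digits maximum `4`, and the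
values `min t u` maximum `4`: a finite check on the original square. The units digit and the digit
in position `n` recover `a`, so distinct entries have distinct powers. -/

open Finset

section Lunar

variable {B : ℕ}

theorem lunarDigit_succ (x d : ℕ) : lunarDigit B x (d + 1) = lunarDigit B (x / B) d := by
  simp only [lunarDigit, pow_succ', Nat.div_div_eq_div_mul]

theorem lunarDigit_eq_zero_of_le (hB : 2 ≤ B) {x d : ℕ} (h : x ≤ d) : lunarDigit B x d = 0 := by
  rw [lunarDigit, Nat.div_eq_of_lt (h.trans_lt (Nat.lt_pow_self hB)), Nat.zero_mod]

theorem mod_pow_eq_sum_lunarDigit (x k : ℕ) :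
    x % B ^ k = ∑ i ∈ range k, lunarDigit B x i * B ^ i := by
  induction k with
  | zero => simp [Nat.mod_one]
  | succ k ih => rw [Nat.mod_pow_succ, ih, sum_range_succ, lunarDigit, mul_comm (B ^ k)]

theorem lunarDigit_ext (hB : 2 ≤ B) {x y : ℕ} (h : ∀ d, lunarDigit B x d = lunarDigit B y d) :
    x = y := by
  have hlt : ∀ z ≤ x + y, z < B ^ (x + y) := fun z hz => hz.trans_lt (Nat.lt_pow_self hB)
  calc x = x % B ^ (x + y) := (Nat.mod_eq_of_lt (hlt x (by omega))).symm
    _ = y % B ^ (x + y) := by simp only [mod_pow_eq_sum_lunarDigit, h]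
    _ = y := Nat.mod_eq_of_lt (hlt y (by omega))

theorem lunarDigit_sum_range_mul_pow {f : ℕ → ℕ} (hf : ∀ i, f i < B) (m d : ℕ) :
    lunarDigit B (∑ i ∈ range m, f i * B ^ i) d = if d < m then f d else 0 := by
  induction m generalizing f d with
  | zero => simp [lunarDigit]
  | succ m ih =>
    have hsplit : ∑ i ∈ range (m + 1), f i * B ^ i
        = f 0 + B * ∑ i ∈ range m, f (i + 1) * B ^ i := by
      rw [sum_range_succ', mul_sum, add_comm]
      simp only [pow_succ', pow_zero, mul_one, mul_left_comm]
    cases d with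
    | zero => simp [lunarDigit, hsplit, Nat.mod_eq_of_lt (hf 0)]
    | succ d =>
      rw [lunarDigit_succ, hsplit, Nat.add_mul_div_left _ _ (by have := hf 0; omega),
        Nat.div_eq_of_lt (hf 0), zero_add, ih fun i => hf (i + 1)]
      simp

theorem lunarDigit_lt (hB : 0 < B) (x d : ℕ) : lunarDigit B x d < B := Nat.mod_lt _ hB

theorem lunarDigit_lunarAdd (hB : 2 ≤ B) (x y d : ℕ) :
    lunarDigit B (lunarAdd B x y) d = max (lunarDigit B x d) (lunarDigit B y d) := by
  rw [lunarAdd, lunarDigit_sum_range_mul_pow fun i =>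
    max_lt (lunarDigit_lt (by omega) x i) (lunarDigit_lt (by omega) y i)]
  split_ifs with hd
  · rfl
  · rw [lunarDigit_eq_zero_of_le hB (by omega), lunarDigit_eq_zero_of_le hB (by omega), max_self]

theorem lunarDigit_lunarMul (hB : 2 ≤ B) (x y d : ℕ) :
    lunarDigit B (lunarMul B x y) d =
      (range (d + 1)).sup fun j => min (lunarDigit B x j) (lunarDigit B y (d - j)) := by
  have hlt (e : ℕ) :
      ((range (e + 1)).sup fun j => min (lunarDigit B x j) (lunarDigit B y (e - j))) < B :=
    (Finset.sup_lt_iff (show ⊥ < B by simp; omega)).2 fun j _ =>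
      (min_le_left _ _).trans_lt (lunarDigit_lt (by omega) x j)
  rw [lunarMul, lunarDigit_sum_range_mul_pow hlt]
  split_ifs with hd
  · rfl
  · refine (Nat.eq_zero_of_le_zero (Finset.sup_le fun j _ => ?_)).symm
    rcases le_or_gt x j with hxj | hjx
    · simp [lunarDigit_eq_zero_of_le hB hxj]
    · simp [lunarDigit_eq_zero_of_le hB (show y ≤ d - j by omega)]

theorem lunarDigit_lunarMul_zero (hB : 2 ≤ B) (x y : ℕ) :
    lunarDigit B (lunarMul B x y) 0 = min (x % B) (lunarDigit B y 0) := by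
  rw [lunarDigit_lunarMul hB]
  simp [lunarDigit]

theorem lunarDigit_of_lt_sq (hB : 2 ≤ B) {x : ℕ} (hx : x < B ^ 2) (d : ℕ) :
    lunarDigit B x d = if d = 0 then x % B else if d = 1 then x / B else 0 := by
  match d with
  | 0 => simp [lunarDigit]
  | 1 => simp [lunarDigit, Nat.mod_eq_of_lt (Nat.div_lt_of_lt_mul (by rwa [← sq]))]
  | d + 2 =>
    simp [lunarDigit, Nat.div_eq_of_lt (hx.trans_le (Nat.pow_le_pow_right (by omega)
      (show 2 ≤ d + 2 by omega)))]

theorem lunarDigit_lunarMul_succ_of_lt_sq (hB : 2 ≤ B) {x : ℕ} (hx : x < B ^ 2) (y d : ℕ) :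
    lunarDigit B (lunarMul B x y) (d + 1) =
      max (min (x % B) (lunarDigit B y (d + 1))) (min (x / B) (lunarDigit B y d)) := by
  rw [lunarDigit_lunarMul hB]
  apply le_antisymm
  · refine Finset.sup_le fun j _ => ?_
    match j with
    | 0 => simp [lunarDigit_of_lt_sq hB hx]
    | 1 => simp [lunarDigit_of_lt_sq hB hx]
    | j + 2 => simp [lunarDigit_of_lt_sq hB hx]
  · refine max_le ?_ ?_
    · simpa [lunarDigit_of_lt_sq hB hx] using
        le_sup (f := fun j => min (lunarDigit B x j) (lunarDigit B y (d + 1 - j)))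
          (mem_range.2 (show 0 < d + 2 by omega))
    · simpa [lunarDigit_of_lt_sq hB hx] using
        le_sup (f := fun j => min (lunarDigit B x j) (lunarDigit B y (d + 1 - j)))
          (mem_range.2 (show 1 < d + 2 by omega))

theorem lunarPow_succ (a : ℕ) {n : ℕ} (hn : 1 ≤ n) :
    lunarPow B a (n + 1) = lunarMul B a (lunarPow B a n) := by
  obtain ⟨m, rfl⟩ := Nat.exists_eq_add_of_le' hn
  rfl

theorem lunarDigit_lunarPow (hB : 2 ≤ B) {a : ℕ} (ha : a < B ^ 2) {n : ℕ} (hn : 1 ≤ n) (d : ℕ) :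
    lunarDigit B (lunarPow B a n) d =
      if d = 0 then a % B else if d < n then min (a / B) (a % B) else if d = n then a / B else 0 := by
  induction n, hn using Nat.le_induction generalizing d with
  | base =>
    rw [show lunarPow B a 1 = a from rfl, lunarDigit_of_lt_sq hB ha]
    grind
  | succ n hn ih =>
    rw [lunarPow_succ a hn]
    cases d with
    | zero => simp [lunarDigit_lunarMul_zero hB, ih]
    | succ d =>
      rw [lunarDigit_lunarMul_succ_of_lt_sq hB ha, ih, ih]
      grind

theorem lunarAdd_lunarAdd_lunarPow (hB : 2 ≤ B) {n : ℕ} (hn : 1 ≤ n) {x y z w : ℕ}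
    (hx : x < B ^ 2) (hy : y < B ^ 2) (hz : z < B ^ 2) (hw : w < B ^ 2)
    (hlow : max (max (x % B) (y % B)) (z % B) = w % B)
    (hhigh : max (max (x / B) (y / B)) (z / B) = w / B)
    (hmid : max (max (min (x / B) (x % B)) (min (y / B) (y % B))) (min (z / B) (z % B)) =
      min (w / B) (w % B)) :
    lunarAdd B (lunarAdd B (lunarPow B x n) (lunarPow B y n)) (lunarPow B z n) =
      lunarPow B w n := by
  refine lunarDigit_ext hB fun d => ?_
  simp only [lunarDigit_lunarAdd hB, lunarDigit_lunarPow hB hx hn, lunarDigit_lunarPow hB hy hn,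
    lunarDigit_lunarPow hB hz hn, lunarDigit_lunarPow hB hw hn]
  split_ifs <;> simp [*]

theorem lunarPow_injOn (hB : 2 ≤ B) {n : ℕ} (hn : 1 ≤ n) :
    Set.InjOn (fun a => lunarPow B a n) (Set.Iio (B ^ 2)) := by
  intro a ha a' ha' h
  have hlow := congrArg (lunarDigit B · 0) h
  have hhigh := congrArg (lunarDigit B · n) h
  simp [lunarDigit_lunarPow hB ha hn, lunarDigit_lunarPow hB ha' hn, show n ≠ 0 by omega]
    at hlow hhigh
  rw [← Nat.div_add_mod a B, ← Nat.div_add_mod a' B, hlow, hhigh]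

end Lunar

theorem Set.InjOn.distinctEntries_comp {f : ℕ → ℕ} {s : Set ℕ} (hf : Set.InjOn f s)
    {M : Fin 3 → Fin 3 → ℕ} (hM : DistinctEntries M) (hMs : ∀ i j, M i j ∈ s) :
    DistinctEntries fun i j => f (M i j) :=
  fun i j i' j' h => hM i j i' j' (hf (hMs i j) (hMs i' j') h)

theorem stmt_13 (n : ℕ) (hn : 1 ≤ n) :
    IsLunarMagic 10
      (fun i j => lunarPow 10 (![![44, 38, 45], ![46, 0, 28], ![18, 47, 8]] i j) n)
      (lunarPow 10 48 n) ∧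
    DistinctEntries
      (fun i j => lunarPow 10 (![![44, 38, 45], ![46, 0, 28], ![18, 47, 8]] i j) n) := by
  have line := @lunarAdd_lunarAdd_lunarPow 10 (by norm_num) n hn
  refine ⟨⟨fun i => ?_, fun j => ?_, ?_, ?_⟩, ?_⟩
  · fin_cases i <;> apply line <;> decide
  · fin_cases j <;> apply line <;> decide
  · apply line <;> decide
  · apply line <;> decide
  · exact (lunarPow_injOn (by norm_num) hn).distinctEntries_comp (by unfold DistinctEntries; decide)
      (by decide)
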